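/- Let p be a prime number (or any real number p > 1), let m and l be natural numbers, and let χ be any complex number. For s ∈ ℂ with p^{3−4s} ≠ 1 and p^{4s−3} ≠ 1, define F(s) = [ p^{(2−2s)m + 3/2 − 2s} / (1 − p^{3−4s}) ] · ( 1 − p^{(3−4s)·l} − χ · p^{1−2s} · (1 − p^{(3−4s)·(l−1)}) ), where the exponent (3−4s)·(l−1) uses l−1 as an integer (possibly −1). Then the function s ↦ p^{2(m+l)s} · F(s) is invariant under s ↦ 3/2 − s; that is, p^{2(m+l)s} · F(s) = p^{2(m+l)(3/2−s)} · F(3/2 − s). Equivalently, F(3/2 − s) = p^{(4s−3)(m+l)} · F(s). -/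

import Mathlib

open Complex

/-- The degree-2 ramified local Siegel series factor `F_N^{(p)}(p^{-2s})`. -/
noncomputable def siegelFactor (p : ℝ) (m l : ℕ) (χ : ℂ) (s : ℂ) : ℂ :=
  (p : ℂ) ^ ((2 - 2 * s) * (m : ℂ) + 3 / 2 - 2 * s) / (1 - (p : ℂ) ^ (3 - 4 * s)) *
    (1 - (p : ℂ) ^ ((3 - 4 * s) * (l : ℂ)) -
      χ * (p : ℂ) ^ (1 - 2 * s) * (1 - (p : ℂ) ^ ((3 - 4 * s) * ((l : ℂ) - 1))))

/-! In the variables `c = p^{1/2}` and `X = p^{-2s}` every power of `p` occurring in `F(s)` is a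
monomial, so `F` is a rational function of `(c, X)`. The reflection `s ↦ 3/2 - s` sends `X` to
`(c^6 X)⁻¹` and hence `Y = c^6 X^2 = p^{3-4s}` to `Y⁻¹`; clearing denominators shows
`F(s) = Y^{m+l} F(3/2 - s)`, and `Y^{m+l}` is exactly the ratio of the two weights
`p^{2(m+l)(3/2-s)} / p^{2(m+l)s}`. -/

theorem cpow_half_add_mul {x : ℂ} (hx : x ≠ 0) (j k : ℕ) (w : ℂ) :
    x ^ ((j : ℂ) / 2 + k * w) = (x ^ (1 / 2 : ℂ)) ^ j * (x ^ w) ^ k := by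
  rw [cpow_add _ _ hx, ← cpow_nat_mul, ← cpow_nat_mul, div_eq_mul_one_div]

theorem cpow_three_sub_four_mul {x : ℂ} (hx : x ≠ 0) (s : ℂ) :
    x ^ (3 - 4 * s) = (x ^ (1 / 2 : ℂ)) ^ 6 * (x ^ (-2 * s)) ^ 2 := by
  rw [← cpow_half_add_mul hx]
  congr 1
  push_cast
  ring

noncomputable def siegelFactorRat (c X : ℂ) (m l : ℕ) (χ : ℂ) : ℂ :=
  c ^ (4 * m + 3) * X ^ (m + 1) / (1 - c ^ 6 * X ^ 2) *
    (1 - (c ^ 6 * X ^ 2) ^ l - χ * c ^ 2 * X * (1 - (c ^ 6 * X ^ 2) ^ ((l : ℤ) - 1)))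

theorem siegelFactorRat_functional_eq {c X : ℂ} (hc : c ≠ 0) (hX : X ≠ 0)
    (hY : c ^ 6 * X ^ 2 ≠ 1) (m l : ℕ) (χ : ℂ) :
    siegelFactorRat c X m l χ =
      (c ^ 6 * X ^ 2) ^ (m + l) * siegelFactorRat c (c ^ 6 * X)⁻¹ m l χ := by
  have hY0 : c ^ 6 * X ^ 2 ≠ 0 := mul_ne_zero (pow_ne_zero 6 hc) (pow_ne_zero 2 hX)
  have hYinv : c ^ 6 * ((c ^ 6 * X)⁻¹) ^ 2 = (c ^ 6 * X ^ 2)⁻¹ := by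
    field_simp
  rw [siegelFactorRat, siegelFactorRat, hYinv, zpow_sub_one₀ hY0,
    zpow_sub_one₀ (inv_ne_zero hY0), zpow_natCast, inv_zpow', zpow_neg, zpow_natCast, inv_inv]
  simp only [inv_pow]
  field_simp
  ring

theorem siegelFactor_eq_siegelFactorRat {p : ℝ} (hp : (p : ℂ) ≠ 0) (m l : ℕ) (χ s : ℂ) :
    siegelFactor p m l χ s =
      siegelFactorRat ((p : ℂ) ^ (1 / 2 : ℂ)) ((p : ℂ) ^ (-2 * s)) m l χ := by
  have hY := cpow_three_sub_four_mul hp s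
  have hlead : (p : ℂ) ^ ((2 - 2 * s) * (m : ℂ) + 3 / 2 - 2 * s) =
      ((p : ℂ) ^ (1 / 2 : ℂ)) ^ (4 * m + 3) * ((p : ℂ) ^ (-2 * s)) ^ (m + 1) := by
    rw [← cpow_half_add_mul hp]
    congr 1
    push_cast
    ring
  have hlin : (p : ℂ) ^ (1 - 2 * s) = ((p : ℂ) ^ (1 / 2 : ℂ)) ^ 2 * (p : ℂ) ^ (-2 * s) := by
    rw [← pow_one ((p : ℂ) ^ (-2 * s)), ← cpow_half_add_mul hp]
    congr 1
    push_cast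
    ring
  rw [siegelFactor, siegelFactorRat, hlead, hlin, mul_comm _ (l : ℂ), cpow_nat_mul, hY,
    show (3 - 4 * s) * ((l : ℂ) - 1) = (((l : ℤ) - 1 : ℤ) : ℂ) * (3 - 4 * s) by push_cast; ring,
    cpow_int_mul, hY]
  ring

theorem siegelFactor_functional_eq {p : ℝ} (hp : (p : ℂ) ≠ 0) (m l : ℕ) (χ s : ℂ)
    (hY : (p : ℂ) ^ (3 - 4 * s) ≠ 1) :
    siegelFactor p m l χ s =
      ((p : ℂ) ^ (3 - 4 * s)) ^ (m + l) * siegelFactor p m l χ (3 / 2 - s) := by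
  have hc : (p : ℂ) ^ (1 / 2 : ℂ) ≠ 0 :=
    (cpow_ne_zero_iff_of_exponent_ne_zero (by norm_num)).mpr hp
  have hX : (p : ℂ) ^ (-2 * s) ≠ 0 := by simp [hp]
  have hflip :
      (p : ℂ) ^ (-2 * (3 / 2 - s)) = (((p : ℂ) ^ (1 / 2 : ℂ)) ^ 6 * (p : ℂ) ^ (-2 * s))⁻¹ := by
    rw [← pow_one ((p : ℂ) ^ (-2 * s)), ← cpow_half_add_mul hp, ← cpow_neg]
    congr 1
    push_cast
    ring
  rw [cpow_three_sub_four_mul hp] at hY ⊢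
  rw [siegelFactor_eq_siegelFactorRat hp, siegelFactor_eq_siegelFactorRat hp, hflip,
    siegelFactorRat_functional_eq hc hX hY]

theorem stmt_15_general (p : ℝ) (hp : 1 < p) (m l : ℕ) (χ : ℂ) (s : ℂ)
    (h1 : (p : ℂ) ^ (3 - 4 * s) ≠ 1) :
    (p : ℂ) ^ (2 * ((m : ℂ) + (l : ℂ)) * s) * siegelFactor p m l χ s =
      (p : ℂ) ^ (2 * ((m : ℂ) + (l : ℂ)) * (3 / 2 - s)) *
        siegelFactor p m l χ (3 / 2 - s) := by
  have hp0 : (p : ℂ) ≠ 0 := ofReal_ne_zero.mpr (by linarith)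
  have hweight : (p : ℂ) ^ (2 * ((m : ℂ) + (l : ℂ)) * (3 / 2 - s)) =
      ((p : ℂ) ^ (3 - 4 * s)) ^ (m + l) * (p : ℂ) ^ (2 * ((m : ℂ) + (l : ℂ)) * s) := by
    rw [← cpow_nat_mul, ← cpow_add _ _ hp0]
    congr 1
    push_cast
    ring
  rw [hweight, siegelFactor_functional_eq hp0 m l χ s h1]
  ring

theorem stmt_15 (p : ℝ) (hp : 1 < p) (m l : ℕ) (χ : ℂ) (s : ℂ)
    (h1 : (p : ℂ) ^ (3 - 4 * s) ≠ 1) (h2 : (p : ℂ) ^ (4 * s - 3) ≠ 1) :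
    (p : ℂ) ^ (2 * ((m : ℂ) + (l : ℂ)) * s) * siegelFactor p m l χ s =
      (p : ℂ) ^ (2 * ((m : ℂ) + (l : ℂ)) * (3 / 2 - s)) *
        siegelFactor p m l χ (3 / 2 - s) :=
  stmt_15_general p hp m l χ s h1
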